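/- Let A be a unital k-algebra, g ∈ A, let · : A ⊗ R → R be a linear map, w ∈ R, and let q ∈ k be a primitive M-th root of unity (M ≥ 1). For j ∈ ℕ₀, a ∈ A, r ∈ R define D_j(a,r) := Σ_{k=0}^{j} (−1)^k · q^{−k(k−1)/2} · binom(j,k)_{q⁻¹} · w^{j−k} · ((g^k a)·r) · w^k. Then for every j ∈ ℕ₀, writing j = M·j_D + j_R with 0 ≤ j_R < M, one has D_j(a,r) = Σ_{ℓ=0}^{j_D} (−1)^ℓ · C(j_D,ℓ) · w^{M(j_D−ℓ)} · D_{j_R}(g^{Mℓ}a, r) · w^{Mℓ}, where C(j_D,ℓ) is the ordinary binomial coefficient. -/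

import Mathlib

open TensorProduct

noncomputable section

/-- Gaussian ($q$-)binomial coefficients, defined by the recursion
`binom(0,0)_q = 1`, `binom(n,m)_q = 0` for `m > n`,
`binom(n,m)_q = binom(n-1,m)_q + q^(n-m) * binom(n-1,m-1)_q`. -/
def qbinom {K : Type*} [CommRing K] (q : K) : ℕ → ℕ → K
  | 0, 0 => 1
  | 0, _ + 1 => 0
  | n + 1, 0 => qbinom q n 0
  | n + 1, m + 1 => qbinom q n (m + 1) + q ^ (n - m) * qbinom q n m

/-- A (left) partial action of a bialgebra `H` on an algebra `R`:
(PA.1) `1 · r = r`; (PA.2) `h · (r*s) = Σ (h₁ · r)(h₂ · s)`;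
(PA.3) `h · (m · r) = Σ (h₁ · 1)(h₂m · r)`. -/
structure PartialAction (k H R : Type*) [CommSemiring k] [Semiring H] [Bialgebra k H]
    [Semiring R] [Algebra k R] where
  act : H →ₗ[k] R →ₗ[k] R
  unit_act : ∀ r : R, act 1 r = r
  mul_act : ∀ (h : H) (r s : R),
    act h (r * s) = TensorProduct.lift
      ((LinearMap.mul k R).compl₁₂ (act.flip r) (act.flip s)) (Coalgebra.comul (R := k) h)
  act_act : ∀ (h m : H) (r : R),
    act h (act m r) = TensorProduct.lift
      ((LinearMap.mul k R).compl₁₂ (act.flip 1)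
        ((act.flip r).comp (LinearMap.mulRight k m))) (Coalgebra.comul (R := k) h)

/-- Symmetry (PA.S): `h · (m · r) = Σ (h₁m · r)(h₂ · 1)`. -/
def PartialAction.IsSymmetric {k H R : Type*} [CommSemiring k] [Semiring H] [Bialgebra k H]
    [Semiring R] [Algebra k R] (P : PartialAction k H R) : Prop :=
  ∀ (h m : H) (r : R),
    P.act h (P.act m r) = TensorProduct.lift
      ((LinearMap.mul k R).compl₁₂ ((P.act.flip r).comp (LinearMap.mulRight k m))
        (P.act.flip 1)) (Coalgebra.comul (R := k) h)

/-- A grouplike element: `Δ g = g ⊗ g` and `ε g = 1`. -/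
def IsGrouplike (k : Type*) {H : Type*} [CommSemiring k] [Semiring H] [Bialgebra k H]
    (g : H) : Prop :=
  Coalgebra.comul (R := k) g = g ⊗ₜ[k] g ∧ Coalgebra.counit (R := k) g = 1

/-- A `(1,g)`-primitive element: `Δ x = x ⊗ 1 + g ⊗ x`. -/
def IsOneGPrimitive (k : Type*) {H : Type*} [CommSemiring k] [Semiring H] [Bialgebra k H]
    (g x : H) : Prop :=
  Coalgebra.comul (R := k) x = x ⊗ₜ[k] (1 : H) + g ⊗ₜ[k] x

end

/-- The expression `D_j(a,r) = Σ_{i=0}^{j} (-1)^i q^{-i(i-1)/2} binom(j,i)_{q⁻¹}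
w^{j-i} ((gⁱa) · r) wⁱ`. -/
def Dfun {k A R : Type*} [Field k] [Ring A] [Algebra k A] [Ring R] [Algebra k R]
    (act : A →ₗ[k] R →ₗ[k] R) (g : A) (w : R) (q : k) (j : ℕ) (a : A) (r : R) : R :=
  ∑ i ∈ Finset.range (j + 1),
    ((-1 : k) ^ i * q⁻¹ ^ (i * (i - 1) / 2) * qbinom q⁻¹ j i) •
      (w ^ (j - i) * act (g ^ i * a) r * w ^ i)

/-!
The coefficient `(-1)^i q^{-i(i-1)/2} binom(j,i)_{q⁻¹}` in `D_j` is the `i`-th coefficient of the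
`q`-Pochhammer polynomial `(X; p)_j = ∏_{t<j} (1 - p^t X)` with `p = q⁻¹` (Rothe's `q`-binomial
theorem). As `p` is a primitive `M`-th root of unity, any `M` consecutive factors multiply to
`1 - X^M`, so `(X; p)_{M j_D + j_R} = (1 - X^M)^{j_D} (X; p)_{j_R}`. Since `(X; p)_{j_R}` has degree
`j_R < M`, its coefficient at `M l + m` (with `m < M`) is `(-1)^l C(j_D, l)` times the `m`-th
coefficient of `(X; p)_{j_R}` (`q`-Lucas). Grouping the summation index of `D_j` as `i = M l + m`
gives the formula.
-/

open Polynomial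

section QBinom

variable {K : Type*} [CommRing K]

theorem qbinom_zero_right (p : K) : ∀ n, qbinom p n 0 = 1
  | 0 => rfl
  | n + 1 => by rw [qbinom, qbinom_zero_right p n]

theorem qbinom_eq_zero_of_lt (p : K) : ∀ {n m}, n < m → qbinom p n m = 0
  | 0, _ + 1, _ => rfl
  | n + 1, m + 1, h => by
    rw [qbinom, qbinom_eq_zero_of_lt p (by omega : n < m + 1),
      qbinom_eq_zero_of_lt p (by omega : n < m), mul_zero, add_zero]

noncomputable def qPochhammer (p : K) (n : ℕ) : K[X] :=
  ∏ t ∈ Finset.range n, (1 - C (p ^ t) * X)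

theorem coeff_mul_one_sub_C_mul_X_succ (f : K[X]) (a : K) (i : ℕ) :
    (f * (1 - C a * X)).coeff (i + 1) = f.coeff (i + 1) - a * f.coeff i := by
  rw [show f * (1 - C a * X) = f - C a * f * X by ring, coeff_sub, coeff_mul_X, coeff_C_mul]

theorem coeff_qPochhammer (p : K) (n i : ℕ) :
    (qPochhammer p n).coeff i = (-1) ^ i * p ^ (i * (i - 1) / 2) * qbinom p n i := by
  induction n generalizing i with
  | zero => cases i <;> simp [qPochhammer, qbinom, coeff_one]
  | succ n ih =>
    rw [qPochhammer, Finset.prod_range_succ, ← qPochhammer]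
    cases i with
    | zero => simp [mul_coeff_zero, ih, qbinom_zero_right]
    | succ i =>
      rw [coeff_mul_one_sub_C_mul_X_succ, ih, ih, qbinom, Nat.triangle_succ]
      rcases le_or_gt i n with hin | hni
      · obtain ⟨e, rfl⟩ := exists_add_of_le hin
        rw [Nat.add_sub_cancel_left]
        ring
      · rw [qbinom_eq_zero_of_lt p hni]
        ring

theorem natDegree_qPochhammer_le (p : K) (n : ℕ) : (qPochhammer p n).natDegree ≤ n :=
  natDegree_le_iff_coeff_eq_zero.2 fun i hi => by
    rw [coeff_qPochhammer, qbinom_eq_zero_of_lt p hi, mul_zero]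

theorem prod_range_one_sub_C_pow_mul_X [IsDomain K] {p : K} {M : ℕ} (hp : IsPrimitiveRoot p M)
    (hM : 0 < M) : ∏ t ∈ Finset.range M, (1 - C (p ^ t) * X) = 1 - X ^ M := by
  -- evaluate `Y ^ M - X ^ M = ∏ (Y - p^t X)` in `K[X][Y]` at `Y = 1`
  have h := congrArg (eval 1)
    (X_pow_sub_C_eq_prod (hp.map_of_injective C_injective) hM (α := (X : K[X])) rfl)
  simpa [eval_prod] using h.symm

theorem qPochhammer_mul_add [IsDomain K] {p : K} {M : ℕ} (hp : IsPrimitiveRoot p M) (hM : 0 < M)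
    (d r : ℕ) : qPochhammer p (M * d + r) = (1 - X ^ M) ^ d * qPochhammer p r := by
  induction d with
  | zero => simp
  | succ d ih =>
    have hperiod : ∀ t, p ^ (M + t) = p ^ t := fun t => by rw [pow_add, hp.pow_eq_one, one_mul]
    rw [show M * (d + 1) + r = M + (M * d + r) by ring, qPochhammer, Finset.prod_range_add,
      prod_range_one_sub_C_pow_mul_X hp hM]
    simp only [hperiod]
    rw [← qPochhammer, ih]
    ring

end QBinom

theorem coeff_expand_mul_of_natDegree_lt {R : Type*} [CommSemiring R] {M : ℕ} (f : R[X])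
    {g : R[X]} (hg : g.natDegree < M) (t : ℕ) {s : ℕ} (hs : s < M) :
    (expand R M f * g).coeff (M * t + s) = f.coeff t * g.coeff s := by
  induction f using Polynomial.induction_on' with
  | add f₁ f₂ h₁ h₂ => rw [map_add, add_mul, coeff_add, h₁, h₂, coeff_add, add_mul]
  | monomial n c =>
    rw [expand_monomial, mul_comm n M, ← C_mul_X_pow_eq_monomial, mul_assoc, coeff_C_mul,
      coeff_X_pow_mul', coeff_monomial]
    rcases lt_trichotomy n t with hnt | rfl | htn
    · have : M * n + M ≤ M * t := by nlinarith
      rw [if_pos (by omega), coeff_eq_zero_of_natDegree_lt (by omega), if_neg hnt.ne,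
        mul_zero, zero_mul]
    · rw [if_pos (by omega), if_pos rfl, Nat.add_sub_cancel_left]
    · have : M * t + M ≤ M * n := by nlinarith
      rw [if_neg (by omega), if_neg htn.ne', mul_zero, zero_mul]

theorem coeff_one_sub_X_pow {R : Type*} [CommRing R] (d l : ℕ) :
    ((1 - X : R[X]) ^ d).coeff l = (-1) ^ l * d.choose l := by
  rw [show (1 - X : R[X]) ^ d = C ((-1) ^ d) * (X + C (-1)) ^ d by
      rw [C_pow, C_neg, C_1, ← mul_pow]; ring,
    coeff_C_mul, coeff_X_add_C_pow]
  rcases le_or_gt l d with hld | hdl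
  · obtain ⟨e, rfl⟩ := exists_add_of_le hld
    have h : (-1 : R) ^ e * (-1) ^ e = 1 := by rw [← mul_pow, neg_one_mul, neg_neg, one_pow]
    rw [Nat.add_sub_cancel_left, pow_add]
    linear_combination ((-1) ^ l * ((l + e).choose l : R)) * h
  · simp [Nat.choose_eq_zero_of_lt hdl]

theorem coeff_qPochhammer_mul_add {K : Type*} [CommRing K] [IsDomain K] {p : K} {M : ℕ}
    (hp : IsPrimitiveRoot p M) {r m : ℕ} (hr : r < M) (hm : m < M) (d l : ℕ) :
    (qPochhammer p (M * d + r)).coeff (M * l + m) =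
      (-1) ^ l * d.choose l * (qPochhammer p r).coeff m := by
  rw [qPochhammer_mul_add hp (by omega),
    show (1 - X ^ M : K[X]) ^ d = expand K M ((1 - X) ^ d) by simp,
    coeff_expand_mul_of_natDegree_lt _ ((natDegree_qPochhammer_le p r).trans_lt hr) l hm,
    coeff_one_sub_X_pow]

theorem sum_range_mul_eq_sum_sum {β : Type*} [AddCommMonoid β] (f : ℕ → β) (M D : ℕ) :
    ∑ i ∈ Finset.range (M * D), f i =
      ∑ l ∈ Finset.range D, ∑ m ∈ Finset.range M, f (M * l + m) := by
  induction D with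
  | zero => simp
  | succ D ih => rw [Nat.mul_succ, Finset.sum_range_add, ih, Finset.sum_range_succ]

theorem Dfun_eq_sum_range_coeff {k A R : Type*} [Field k] [Ring A] [Algebra k A] [Ring R]
    [Algebra k R] (act : A →ₗ[k] R →ₗ[k] R) (g : A) (w : R) (q : k) {j N : ℕ} (hN : j < N)
    (a : A) (r : R) :
    Dfun act g w q j a r = ∑ i ∈ Finset.range N,
      (qPochhammer q⁻¹ j).coeff i • (w ^ (j - i) * act (g ^ i * a) r * w ^ i) := by
  simp only [Dfun, ← coeff_qPochhammer]
  refine Finset.sum_subset (Finset.range_subset_range.2 hN) fun i _ hi => ?_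
  rw [coeff_eq_zero_of_natDegree_lt ((natDegree_qPochhammer_le _ j).trans_lt
    (by simpa using hi)), zero_smul]

theorem stmt9_general {k A R : Type*} [Field k]
    [Ring A] [Algebra k A] [Ring R] [Algebra k R]
    (act : A →ₗ[k] R →ₗ[k] R) (g : A) (w : R)
    (q : k) (M : ℕ) (hq : IsPrimitiveRoot q M) :
    ∀ (j jD jR : ℕ), j = M * jD + jR → jR < M → ∀ (a : A) (r : R),
      Dfun act g w q j a r =
        ∑ l ∈ Finset.range (jD + 1),
          ((-1 : k) ^ l * (jD.choose l : k)) •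
            (w ^ (M * (jD - l)) * Dfun act g w q jR (g ^ (M * l) * a) r * w ^ (M * l)) := by
  rintro j jD jR rfl hjR a r
  rw [Dfun_eq_sum_range_coeff act g w q (N := M * (jD + 1)) (by rw [Nat.mul_succ]; omega),
    sum_range_mul_eq_sum_sum]
  refine Finset.sum_congr rfl fun l hl => ?_
  rw [Dfun_eq_sum_range_coeff act g w q hjR, Finset.mul_sum, Finset.sum_mul, Finset.smul_sum]
  refine Finset.sum_congr rfl fun m hm => ?_
  have hl : l ≤ jD := Nat.lt_succ_iff.1 (Finset.mem_range.1 hl)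
  rw [coeff_qPochhammer_mul_add hq.inv hjR (Finset.mem_range.1 hm), mul_smul_comm,
    smul_mul_assoc, smul_smul, ← mul_assoc (g ^ m), ← pow_add, add_comm m]
  rcases le_or_gt m jR with hmj | hjm
  · have hMl : M * l ≤ M * jD := Nat.mul_le_mul_left M hl
    have hexp : M * jD + jR - (M * l + m) = M * (jD - l) + (jR - m) := by
      rw [Nat.mul_sub]; omega
    rw [hexp, pow_add, add_comm (M * l) m, pow_add w m]
    simp only [mul_assoc]
  · rw [coeff_eq_zero_of_natDegree_lt ((natDegree_qPochhammer_le _ jR).trans_lt hjm)]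
    simp

/-- Lemma 3.5(i): if `q` is a primitive `M`-th root of unity and
`j = M j_D + j_R` with `j_R < M`, then
`D_j(a,r) = Σ_{ℓ=0}^{j_D} (-1)^ℓ C(j_D,ℓ) w^{M(j_D-ℓ)} D_{j_R}(g^{Mℓ}a, r) w^{Mℓ}`. -/
theorem stmt9 {k A R : Type*} [Field k] [IsAlgClosed k] [CharZero k]
    [Ring A] [Algebra k A] [Ring R] [Algebra k R]
    (act : A →ₗ[k] R →ₗ[k] R) (g : A) (w : R)
    (q : k) (M : ℕ) (hM : 1 ≤ M) (hq : IsPrimitiveRoot q M) :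
    ∀ (j jD jR : ℕ), j = M * jD + jR → jR < M → ∀ (a : A) (r : R),
      Dfun act g w q j a r =
        ∑ l ∈ Finset.range (jD + 1),
          ((-1 : k) ^ l * (jD.choose l : k)) •
            (w ^ (M * (jD - l)) * Dfun act g w q jR (g ^ (M * l) * a) r * w ^ (M * l)) :=
  stmt9_general act g w q M hq
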